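/- Let D = (E, F) be a delta-matroid and e ∈ E with primal type p (i.e., some minimum-cardinality feasible set contains e). Then the minimum feasible-set size of D^{*|e} is r(D_min) − 1; moreover e lies in no set of F_min(D^{*|e}) ∪ F_{min+1}(D^{*|e}) (primal type u in D^{*|e}), and e lies in some minimum-cardinality feasible set of D^{×|e} (primal type p in D^{×|e}). -/

import Mathlib

open Finset Polynomial

variable {α : Type*} [DecidableEq α]

/-- The twist of a collection of feasible sets with respect to `A`. -/
noncomputable def SS.twist (A : Finset α) (F : Finset (Finset α)) : Finset (Finset α) :=
  F.image (fun X => symmDiff A X)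

/-- Loop complementation at a single element `e`. -/
noncomputable def SS.lc (e : α) (F : Finset (Finset α)) : Finset (Finset α) :=
  symmDiff F ((F.filter (fun X => e ∉ X)).image (insert e))

/-- The two generating operations: twist `*` and loop complementation `×`. -/
inductive SS.Op | star | cross

/-- Apply a single operation at a single element. -/
noncomputable def SS.opElem : SS.Op → α → Finset (Finset α) → Finset (Finset α)
  | .star, e, F => SS.twist {e} F
  | .cross, e, F => SS.lc e F

/-- Apply a word in `{*, ×}` at a single element. -/
noncomputable def SS.wordElem (w : List SS.Op) (e : α) (F : Finset (Finset α)) : Finset (Finset α) :=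
  w.foldl (fun F o => SS.opElem o e F) F

/-- Apply a word in `{*, ×}` elementwise on a subset `A`. -/
noncomputable def SS.wordOn (w : List SS.Op) (A : Finset α) (F : Finset (Finset α)) : Finset (Finset α) :=
  A.toList.foldl (fun F e => SS.wordElem w e F) F

/-- Size of a largest feasible set. -/
noncomputable def SS.rmax (F : Finset (Finset α)) : ℕ := F.sup Finset.card

/-- Size of a smallest feasible set. -/
noncomputable def SS.rmin (F : Finset (Finset α)) : ℕ := sInf (Finset.card '' (F : Set (Finset α)))

/-- The width of a set system. -/
noncomputable def SS.width (F : Finset (Finset α)) : ℕ := SS.rmax F - SS.rmin F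

/-- The minimum-cardinality feasible sets. -/
noncomputable def SS.Fmin (F : Finset (Finset α)) : Finset (Finset α) :=
  F.filter (fun X => X.card = SS.rmin F)

/-- The maximum-cardinality feasible sets. -/
noncomputable def SS.Fmax (F : Finset (Finset α)) : Finset (Finset α) :=
  F.filter (fun X => X.card = SS.rmax F)

/-- The partial-`w` polynomial of a set system with ground set `E`. -/
noncomputable def SS.poly (w : List SS.Op) (E : Finset α) (F : Finset (Finset α)) :
    Polynomial ℤ :=
  ∑ A ∈ E.powerset, (Polynomial.X : Polynomial ℤ) ^ SS.width (SS.wordOn w A F)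

/-- A proper set system satisfying the symmetric exchange axiom. -/
noncomputable def SS.IsDeltaMatroid (F : Finset (Finset α)) : Prop :=
  F.Nonempty ∧ ∀ X ∈ F, ∀ Y ∈ F, ∀ u ∈ symmDiff X Y,
    ∃ v ∈ symmDiff X Y, symmDiff X {u, v} ∈ F

/-- Apply a sequence of single-element twists and loop complementations. -/
noncomputable def SS.seqApply : List (SS.Op × α) → Finset (Finset α) → Finset (Finset α)
  | [], F => F
  | (o, e) :: s, F => SS.seqApply s (SS.opElem o e F)

/-- A set system is vf-safe if every sequence of single-element twists and loop
complementations yields a delta-matroid. -/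
noncomputable def SS.VfSafe (F : Finset (Finset α)) : Prop :=
  ∀ s : List (SS.Op × α), SS.IsDeltaMatroid (SS.seqApply s F)

/-- The direct sum of two set systems. -/
noncomputable def SS.dsum (F F' : Finset (Finset α)) : Finset (Finset α) :=
  (F ×ˢ F').image (fun p => p.1 ∪ p.2)

open SS

/-!
Twisting at `e` changes every set's size by exactly one, so a minimum feasible set `A ∋ e`
becomes `A \ {e}`, which is again minimum; twisted sets containing `e` are `X ∪ {e}` with
`X ∈ F`, hence at least two larger than the new minimum. Loop complementation at `e` only
toggles sets `X ∪ {e}` with `e ∉ X ∈ F`, which are strictly larger than `A`, so `A` survives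
and stays minimum.
-/

namespace SS

lemma rmin_le_card {β : Type*} {F : Finset (Finset β)} {X : Finset β} (hX : X ∈ F) :
    rmin F ≤ X.card :=
  Nat.sInf_le ⟨X, hX, rfl⟩

lemma mem_Fmin_iff {β : Type*} {F : Finset (Finset β)} {X : Finset β} :
    X ∈ Fmin F ↔ X ∈ F ∧ ∀ Y ∈ F, X.card ≤ Y.card := by
  refine ⟨fun h => ?_, fun ⟨hX, hle⟩ => ?_⟩
  · obtain ⟨hX, hcard⟩ := mem_filter.mp h
    exact ⟨hX, fun Y hY => hcard ▸ rmin_le_card hY⟩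
  · refine mem_filter.mpr ⟨hX, le_antisymm ?_ (rmin_le_card hX)⟩
    exact le_csInf ⟨X.card, X, hX, rfl⟩ (by rintro n ⟨Y, hY, rfl⟩; exact hle Y hY)

lemma symmDiff_singleton_of_mem {e : α} {X : Finset α} (he : e ∈ X) :
    symmDiff {e} X = X.erase e := by
  ext a
  by_cases hae : a = e <;> simp [mem_symmDiff, hae, he]

lemma symmDiff_singleton_of_notMem {e : α} {X : Finset α} (he : e ∉ X) :
    symmDiff {e} X = insert e X := by
  ext a
  by_cases hae : a = e <;> simp [mem_symmDiff, hae, he]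

lemma card_le_card_symmDiff_singleton_add_one (e : α) (X : Finset α) :
    X.card ≤ (symmDiff {e} X).card + 1 :=
  calc X.card ≤ (symmDiff {e} X ∪ {e}).card := card_le_card (le_symmDiff_sup_left _ _)
    _ ≤ (symmDiff {e} X).card + 1 := card_union_le _ _

lemma erase_mem_Fmin_twist {F : Finset (Finset α)} {A : Finset α} {e : α}
    (hA : A ∈ Fmin F) (he : e ∈ A) : A.erase e ∈ Fmin (twist {e} F) := by
  obtain ⟨hAF, hAmin⟩ := mem_Fmin_iff.mp hA
  refine mem_Fmin_iff.mpr ⟨mem_image.mpr ⟨A, hAF, symmDiff_singleton_of_mem he⟩, ?_⟩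
  intro Y hY
  obtain ⟨X, hX, rfl⟩ := mem_image.mp hY
  have := hAmin X hX
  have := card_le_card_symmDiff_singleton_add_one e X
  rw [card_erase_of_mem he]
  omega

lemma rmin_add_one_le_card_insert {F : Finset (Finset α)} {X : Finset α} {e : α}
    (hX : X ∈ F) (he : e ∉ X) : rmin F + 1 ≤ (insert e X).card := by
  rw [card_insert_of_notMem he]
  exact Nat.succ_le_succ (rmin_le_card hX)

lemma rmin_add_one_le_card_of_mem_twist {F : Finset (Finset α)} {B : Finset α} {e : α}
    (hB : B ∈ twist {e} F) (he : e ∈ B) : rmin F + 1 ≤ B.card := by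
  obtain ⟨X, hX, rfl⟩ := mem_image.mp hB
  have heX : e ∉ X := by simpa [mem_symmDiff] using he
  exact symmDiff_singleton_of_notMem heX ▸ rmin_add_one_le_card_insert hX heX

lemma rmin_le_card_of_mem_lc {F : Finset (Finset α)} {Y : Finset α} {e : α}
    (hY : Y ∈ lc e F) : rmin F ≤ Y.card := by
  rcases mem_symmDiff.mp hY with ⟨hYF, -⟩ | ⟨hYI, -⟩
  · exact rmin_le_card hYF
  · obtain ⟨X, hX, rfl⟩ := mem_image.mp hYI
    obtain ⟨hXF, hXe⟩ := mem_filter.mp hX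
    exact (Nat.le_succ _).trans (rmin_add_one_le_card_insert hXF hXe)

lemma mem_Fmin_lc {F : Finset (Finset α)} {A : Finset α} {e : α}
    (hA : A ∈ Fmin F) : A ∈ Fmin (lc e F) := by
  obtain ⟨hAF, hAcard⟩ := mem_filter.mp hA
  have hAlc : A ∈ lc e F := by
    refine mem_symmDiff.mpr (Or.inl ⟨hAF, ?_⟩)
    intro hAI
    obtain ⟨X, hX, rfl⟩ := mem_image.mp hAI
    obtain ⟨hXF, hXe⟩ := mem_filter.mp hX
    have := rmin_add_one_le_card_insert hXF hXe
    omega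
  exact mem_Fmin_iff.mpr ⟨hAlc, fun Y hY => hAcard ▸ rmin_le_card_of_mem_lc hY⟩

end SS

theorem stmt12_general (F : Finset (Finset α)) (e : α)
    (hp : ∃ A ∈ SS.Fmin F, e ∈ A) :
    SS.rmin (SS.twist {e} F) + 1 = SS.rmin F ∧
    (∀ B ∈ SS.twist {e} F, B.card ≤ SS.rmin (SS.twist {e} F) + 1 → e ∉ B) ∧
    (∃ B ∈ SS.Fmin (SS.lc e F), e ∈ B) := by
  obtain ⟨A, hA, he⟩ := hp
  have hAcard : A.card = rmin F := (mem_filter.mp hA).2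
  have hAtwist : (A.erase e).card = rmin (twist {e} F) :=
    (mem_filter.mp (erase_mem_Fmin_twist hA he)).2
  have hApos : 0 < A.card := card_pos.mpr ⟨e, he⟩
  have hrmin : rmin (twist {e} F) + 1 = rmin F := by
    rw [← hAtwist, card_erase_of_mem he]
    omega
  refine ⟨hrmin, fun B hB hcard heB => ?_, ⟨A, mem_Fmin_lc hA, he⟩⟩
  have := rmin_add_one_le_card_of_mem_twist hB heB
  omega

theorem stmt12 (F : Finset (Finset α)) (hD : SS.IsDeltaMatroid F) (e : α)
    (hp : ∃ A ∈ SS.Fmin F, e ∈ A) :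
    SS.rmin (SS.twist {e} F) + 1 = SS.rmin F ∧
    (∀ B ∈ SS.twist {e} F, B.card ≤ SS.rmin (SS.twist {e} F) + 1 → e ∉ B) ∧
    (∃ B ∈ SS.Fmin (SS.lc e F), e ∈ B) :=
  stmt12_general F e hp
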